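/- (Infinite glider streams) For every natural number p ≥ 14, there exists a configuration f : ℤ × ℤ → Bool with infinite support such that L^[p] f = f and L^[q] f ≠ f for every q with 0 < q < p; that is, allowing infinitely many live cells, oscillators of every period p ≥ 14 exist. -/

import Mathlib

/-- The 8 neighbours of a cell: cells at Chebyshev distance 1. -/
noncomputable def neighbours (c : ℤ × ℤ) : Finset (ℤ × ℤ) :=
  (Finset.Icc (c.1 - 1) (c.1 + 1) ×ˢ Finset.Icc (c.2 - 1) (c.2 + 1)).erase c

/-- Number of live neighbours of `c` in configuration `f`. -/
noncomputable def liveNeighbours (f : ℤ × ℤ → Bool) (c : ℤ × ℤ) : ℕ :=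
  ((neighbours c).filter (fun d => f d = true)).card

/-- One step of Conway's Game of Life: a cell is alive iff it has exactly 3
live neighbours, or it is alive and has exactly 2 live neighbours. -/
noncomputable def lifeStep (f : ℤ × ℤ → Bool) : ℤ × ℤ → Bool := fun c =>
  (liveNeighbours f c == 3) || (f c && (liveNeighbours f c == 2))

/-- The support of a configuration: the set of live cells. -/
def support (f : ℤ × ℤ → Bool) : Set (ℤ × ℤ) := {c | f c = true}

/-- An oscillator of period `p`: finite nonempty support, `L^[p] f = f`,
and `L^[q] f ≠ f` for all `0 < q < p`. -/
def IsOscillator (p : ℕ) (f : ℤ × ℤ → Bool) : Prop :=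
  (support f).Finite ∧ (support f).Nonempty ∧
    lifeStep^[p] f = f ∧ ∀ q : ℕ, 0 < q → q < p → lifeStep^[q] f ≠ f

/-!
A glider reproduces itself shifted by `(1, 1)` every four generations, and at time `t` it lies in
the anti-diagonal strip `2 (x + y) - 8 ≤ t ≤ 2 (x + y) - 1`. Put gliders on one track at all times
`t ≡ k [ZMOD p]`. Around any cell at most two consecutive gliders of this stream are visible, and
two gliders at least `14` generations apart evolve independently: for gaps `14` and `15` this is a
finite check, for larger gaps no cell sees both. Hence one Life step takes the stream at time `k`
to the stream at time `k + 1`, so it has period `p`; comparing it with its shifts near the origin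
shows that no smaller period occurs, and it contains infinitely many gliders.
-/

lemma eq_or_eq_add_of_modEq {p t t₀ : ℤ} (h : t ≡ t₀ [ZMOD p]) (h₁ : t₀ - p < t)
    (h₂ : t < t₀ + 2 * p) : t = t₀ ∨ t = t₀ + p := by
  obtain ⟨m, hm⟩ := Int.modEq_iff_dvd.1 h.symm
  have hm₁ : -1 < m := by nlinarith
  have hm₂ : m < 2 := by nlinarith
  interval_cases m
  · left; linarith
  · right; linarith

section Life

variable {f g : ℤ × ℤ → Bool} {c d : ℤ × ℤ}

lemma mem_Icc_sub_one_add_one :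
    d ∈ Set.Icc (c - 1) (c + 1) ↔ c.1 - 1 ≤ d.1 ∧ d.1 ≤ c.1 + 1 ∧ c.2 - 1 ≤ d.2 ∧ d.2 ≤ c.2 + 1 := by
  simp only [Set.mem_Icc, Prod.le_def, Prod.fst_sub, Prod.snd_sub, Prod.fst_add, Prod.snd_add,
    Prod.fst_one, Prod.snd_one]
  tauto

lemma mem_neighbours : d ∈ neighbours c ↔ d ≠ c ∧ d ∈ Set.Icc (c - 1) (c + 1) := by
  rw [neighbours, Finset.mem_erase, Finset.mem_product, Finset.mem_Icc, Finset.mem_Icc,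
    mem_Icc_sub_one_add_one]
  tauto

lemma lifeStep_congr (h : Set.EqOn f g (Set.Icc (c - 1) (c + 1))) :
    lifeStep f c = lifeStep g c := by
  have hN : liveNeighbours f c = liveNeighbours g c := by
    unfold liveNeighbours
    congr 1
    exact Finset.filter_congr fun d hd => by rw [h (mem_neighbours.1 hd).2]
  rw [lifeStep, lifeStep, hN, h (by simp)]

lemma lifeStep_eq_false (h : ∀ d ∈ Set.Icc (c - 1) (c + 1), f d = false) :
    lifeStep f c = false := by
  rw [lifeStep_congr (g := fun _ => false) h]
  simp [lifeStep, liveNeighbours]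

lemma lifeStep_sup_of_eq_false (h : ∀ d ∈ Set.Icc (c - 1) (c + 1), f d = false) :
    lifeStep (f ⊔ g) c = lifeStep g c :=
  lifeStep_congr fun d hd => by simp [h d hd]

lemma support_sup (f g : ℤ × ℤ → Bool) : support (f ⊔ g) = support f ∪ support g := by
  ext c
  simp [support]

lemma neighbours_sub (c v : ℤ × ℤ) :
    neighbours (c - v) = (neighbours c).map (Equiv.subRight v).toEmbedding := by
  ext d
  rw [Finset.mem_map_equiv, Equiv.subRight_symm_apply, mem_neighbours, mem_neighbours,
    mem_Icc_sub_one_add_one, mem_Icc_sub_one_add_one, ne_eq, ne_eq, Prod.ext_iff, Prod.ext_iff]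
  simp only [Prod.fst_sub, Prod.snd_sub, Prod.fst_add, Prod.snd_add]
  omega

lemma lifeStep_comp_sub (f : ℤ × ℤ → Bool) (v : ℤ × ℤ) :
    lifeStep (fun c => f (c - v)) = fun c => lifeStep f (c - v) := by
  funext c
  have hN : liveNeighbours (fun c => f (c - v)) c = liveNeighbours f (c - v) := by
    rw [liveNeighbours, liveNeighbours, neighbours_sub, Finset.filter_map, Finset.card_map]
    rfl
  rw [lifeStep, lifeStep, hN]

lemma lifeStep_eq_of_support_subset {a b : ℤ × ℤ} (hf : support f ⊆ Set.Icc a b)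
    (hg : support g ⊆ Set.Icc a b) (h : ∀ c ∈ Finset.Icc (a - 1) (b + 1), lifeStep f c = g c) :
    lifeStep f = g := by
  funext c
  by_cases hc : c ∈ Finset.Icc (a - 1) (b + 1)
  · exact h c hc
  have hout : ∀ e, e ∉ Set.Icc a b → ∀ k : ℤ × ℤ → Bool, support k ⊆ Set.Icc a b → k e = false :=
    fun e he k hk => by simpa [support] using mt (@hk e) he
  simp only [Finset.mem_Icc, Prod.le_def, Prod.fst_sub, Prod.snd_sub, Prod.fst_add, Prod.snd_add,
    Prod.fst_one, Prod.snd_one] at hc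
  rw [hout c (by simp only [Set.mem_Icc, Prod.le_def]; omega) g hg]
  refine lifeStep_eq_false fun d hd => hout d ?_ f hf
  rw [mem_Icc_sub_one_add_one] at hd
  simp only [Set.mem_Icc, Prod.le_def]
  omega

end Life

/-- Phase `r` of the glider, `0 ≤ r < 4`; phase `3` is followed by phase `0` shifted by `(1, 1)`. -/
def gliderPhase (r : ℤ) : List (ℤ × ℤ) :=
  if r = 0 then [(1, 0), (2, 1), (0, 2), (1, 2), (2, 2)]
  else if r = 1 then [(0, 1), (2, 1), (1, 2), (2, 2), (1, 3)]
  else if r = 2 then [(0, 2), (1, 3), (2, 1), (2, 2), (2, 3)]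
  else if r = 3 then [(1, 1), (1, 3), (2, 2), (2, 3), (3, 2)]
  else []

def glider (t : ℤ) (c : ℤ × ℤ) : Bool := decide (c - (t / 4, t / 4) ∈ gliderPhase (t % 4))

lemma glider_add_four_mul (t m : ℤ) : glider (t + 4 * m) = fun c => glider t (c - (m, m)) := by
  funext c
  have h1 : (t + 4 * m) % 4 = t % 4 := by omega
  have h2 : c - ((t + 4 * m) / 4, (t + 4 * m) / 4) = c - (m, m) - (t / 4, t / 4) := by
    ext <;> simp <;> omega
  rw [glider, glider, h1, h2]

lemma mem_gliderPhase : ∀ r ∈ Finset.Icc (0 : ℤ) 3, ∀ d ∈ gliderPhase r,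
    (0 ≤ d.1 ∧ d.1 ≤ 3 ∧ 0 ≤ d.2 ∧ d.2 ≤ 3) ∧ r + 1 ≤ 2 * (d.1 + d.2) ∧ 2 * (d.1 + d.2) ≤ r + 8 := by
  decide

lemma bounds_of_glider_eq_true {t : ℤ} {c : ℤ × ℤ} (h : glider t c = true) :
    (t / 4 ≤ c.1 ∧ c.1 ≤ t / 4 + 3 ∧ t / 4 ≤ c.2 ∧ c.2 ≤ t / 4 + 3) ∧
      2 * (c.1 + c.2) - 8 ≤ t ∧ t ≤ 2 * (c.1 + c.2) - 1 := by
  rw [glider, decide_eq_true_iff] at h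
  have := mem_gliderPhase _ (Finset.mem_Icc.2 ⟨by omega, by omega⟩) _ h
  simp only [Prod.fst_sub, Prod.snd_sub] at this
  omega

lemma support_glider_subset {t : ℤ} (h0 : 0 ≤ t) (h1 : t ≤ 19) :
    support (glider t) ⊆ Set.Icc (0, 0) (7, 7) := fun c hc => by
  have := (bounds_of_glider_eq_true hc).1
  simp only [Set.mem_Icc, Prod.le_def]
  omega

set_option maxHeartbeats 1000000 in
set_option maxRecDepth 10000 in
lemma lifeStep_glider_apply_of_mem_Icc : ∀ r ∈ Finset.Icc (0 : ℤ) 3,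
    ∀ c ∈ Finset.Icc ((-1, -1) : ℤ × ℤ) (8, 8), lifeStep (glider r) c = glider (r + 1) c := by
  decide

theorem lifeStep_glider (t : ℤ) : lifeStep (glider t) = glider (t + 1) := by
  obtain ⟨r, m, hr, rfl⟩ : ∃ r m, r ∈ Finset.Icc (0 : ℤ) 3 ∧ t = r + 4 * m :=
    ⟨t % 4, t / 4, Finset.mem_Icc.2 ⟨by omega, by omega⟩, by omega⟩
  have hr' := Finset.mem_Icc.1 hr
  have hphase : lifeStep (glider r) = glider (r + 1) :=
    lifeStep_eq_of_support_subset (support_glider_subset (by omega) (by omega))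
      (support_glider_subset (by omega) (by omega)) (lifeStep_glider_apply_of_mem_Icc r hr)
  rw [glider_add_four_mul, lifeStep_comp_sub, hphase, add_right_comm, glider_add_four_mul]

set_option maxHeartbeats 4000000 in
set_option maxRecDepth 10000 in
lemma lifeStep_glider_sup_glider_apply_of_mem_Icc : ∀ P ∈ Finset.Icc (14 : ℤ) 15,
    ∀ r ∈ Finset.Icc (0 : ℤ) 3, ∀ c ∈ Finset.Icc ((-1, -1) : ℤ × ℤ) (8, 8),
      lifeStep (glider r ⊔ glider (r + P)) c = (glider (r + 1) ⊔ glider (r + P + 1)) c := by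
  decide

theorem lifeStep_glider_sup_glider {P : ℤ} (hP : 14 ≤ P) (t : ℤ) :
    lifeStep (glider t ⊔ glider (t + P)) = glider (t + 1) ⊔ glider (t + P + 1) := by
  rcases le_or_gt P 15 with hP' | hP'
  · obtain ⟨r, m, hr, rfl⟩ : ∃ r m, r ∈ Finset.Icc (0 : ℤ) 3 ∧ t = r + 4 * m :=
      ⟨t % 4, t / 4, Finset.mem_Icc.2 ⟨by omega, by omega⟩, by omega⟩
    have hr' := Finset.mem_Icc.1 hr
    have hshift (s : ℤ) : glider (r + 4 * m + s) = fun c => glider (r + s) (c - (m, m)) := by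
      rw [add_right_comm, glider_add_four_mul]
    have hpair : lifeStep (glider r ⊔ glider (r + P)) = glider (r + 1) ⊔ glider (r + P + 1) := by
      refine lifeStep_eq_of_support_subset (a := (0, 0)) (b := (7, 7)) ?_ ?_
        (lifeStep_glider_sup_glider_apply_of_mem_Icc P (Finset.mem_Icc.2 ⟨hP, hP'⟩) r hr) <;>
      rw [support_sup] <;>
      exact Set.union_subset (support_glider_subset (by omega) (by omega))
        (support_glider_subset (by omega) (by omega))
    calc lifeStep (glider (r + 4 * m) ⊔ glider (r + 4 * m + P))
        = lifeStep (fun c => (glider r ⊔ glider (r + P)) (c - (m, m))) := by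
          rw [glider_add_four_mul, hshift]; rfl
      _ = glider (r + 4 * m + 1) ⊔ glider (r + 4 * m + P + 1) := by
          rw [lifeStep_comp_sub, hpair, add_assoc (r + 4 * m) P, hshift, hshift, ← add_assoc]; rfl
  · funext c
    -- the strips of gliders `16` or more generations apart cannot both meet the box around `c`
    have hfar : (∀ d ∈ Set.Icc (c - 1) (c + 1), glider t d = false) ∨
        ∀ d ∈ Set.Icc (c - 1) (c + 1), glider (t + P) d = false := by
      by_contra! ⟨⟨d, hd, hgd⟩, ⟨e, he, hge⟩⟩
      have := (bounds_of_glider_eq_true (by simpa using hgd)).2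
      have := (bounds_of_glider_eq_true (by simpa using hge)).2
      rw [mem_Icc_sub_one_add_one] at hd he
      omega
    rcases hfar with h | h
    · rw [lifeStep_sup_of_eq_false h, lifeStep_glider, Pi.sup_apply, ← lifeStep_glider t,
        lifeStep_eq_false h]
      exact (bot_sup_eq _).symm
    · rw [sup_comm, lifeStep_sup_of_eq_false h, lifeStep_glider, Pi.sup_apply,
        ← lifeStep_glider (t + P), lifeStep_eq_false h]
      exact (sup_bot_eq _).symm

section Stream

variable {p k t₀ : ℤ} {c : ℤ × ℤ}

open Classical in
/-- The gliders of all times `t ≡ k [ZMOD p]`, following each other on one track. -/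
noncomputable def gliderStream (p k : ℤ) (c : ℤ × ℤ) : Bool :=
  decide (∃ t, t ≡ k [ZMOD p] ∧ glider t c = true)

lemma gliderStream_eq_true :
    gliderStream p k c = true ↔ ∃ t, t ≡ k [ZMOD p] ∧ glider t c = true := by
  simp [gliderStream]

lemma gliderStream_congr {k' : ℤ} (h : k ≡ k' [ZMOD p]) : gliderStream p k = gliderStream p k' := by
  funext c
  rw [Bool.eq_iff_iff, gliderStream_eq_true, gliderStream_eq_true]
  exact exists_congr fun t => and_congr_left' ⟨fun ht => ht.trans h, fun ht => ht.trans h.symm⟩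

lemma gliderStream_apply_eq_sup (ht₀ : t₀ ≡ k [ZMOD p]) (hlo : t₀ - p < 2 * (c.1 + c.2) - 8)
    (hhi : 2 * (c.1 + c.2) - 1 < t₀ + 2 * p) :
    gliderStream p k c = (glider t₀ ⊔ glider (t₀ + p)) c := by
  rw [Bool.eq_iff_iff, gliderStream_eq_true, Pi.sup_apply, Bool.max_eq_or, Bool.or_eq_true]
  constructor
  · rintro ⟨t, ht, hg⟩
    have := (bounds_of_glider_eq_true hg).2
    rcases eq_or_eq_add_of_modEq (ht.trans ht₀.symm) (by omega) (by omega) with rfl | rfl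
    exacts [Or.inl hg, Or.inr hg]
  · rintro (hg | hg)
    exacts [⟨t₀, ht₀, hg⟩, ⟨t₀ + p, Int.add_modEq_right.trans ht₀, hg⟩]

lemma gliderStream_apply_eq (ht₀ : t₀ ≡ k [ZMOD p]) (hlo : t₀ - p < 2 * (c.1 + c.2) - 8)
    (hhi : 2 * (c.1 + c.2) - 1 < t₀ + p) : gliderStream p k c = glider t₀ c := by
  have hfar : glider (t₀ + p) c = false := by
    by_contra h
    have := (bounds_of_glider_eq_true (by simpa using h)).2
    omega
  rw [gliderStream_apply_eq_sup ht₀ hlo (by omega), Pi.sup_apply, hfar, Bool.max_eq_or,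
    Bool.or_false]

theorem lifeStep_gliderStream (hp : 14 ≤ p) (k : ℤ) :
    lifeStep (gliderStream p k) = gliderStream p (k + 1) := by
  funext c
  -- `t₀` is the earliest glider of the stream that can reach the box around `c`
  set a := 2 * (c.1 + c.2) - 12
  obtain ⟨t₀, ht₀, hlo, hhi⟩ : ∃ t₀, t₀ ≡ k [ZMOD p] ∧ a ≤ t₀ ∧ t₀ < a + p :=
    ⟨a + (k - a) % p, by simpa using (Int.mod_modEq (k - a) p).add_left a,
      by have := Int.emod_nonneg (k - a) (by omega : p ≠ 0); omega,
      by have := Int.emod_lt_of_pos (k - a) (by omega : 0 < p); omega⟩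
  have hnear : Set.EqOn (gliderStream p k) (glider t₀ ⊔ glider (t₀ + p)) (Set.Icc (c - 1) (c + 1)) :=
    fun d hd => by
      rw [mem_Icc_sub_one_add_one] at hd
      exact gliderStream_apply_eq_sup ht₀ (by omega) (by omega)
  have hfar : glider (t₀ + p + 1) c = false := by
    by_contra h
    have := (bounds_of_glider_eq_true (by simpa using h)).2
    omega
  rw [lifeStep_congr hnear, lifeStep_glider_sup_glider (by omega), Pi.sup_apply, hfar,
    Bool.max_eq_or, Bool.or_false, gliderStream_apply_eq (ht₀.add_right 1) (by omega) (by omega)]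

theorem iterate_lifeStep_gliderStream (hp : 14 ≤ p) (k : ℤ) (n : ℕ) :
    lifeStep^[n] (gliderStream p k) = gliderStream p (k + n) := by
  induction n with
  | zero => simp
  | succ n ih =>
    rw [Function.iterate_succ_apply', ih, lifeStep_gliderStream hp, Nat.cast_succ, add_assoc]

theorem support_gliderStream_infinite (hp : p ≠ 0) : (support (gliderStream p 0)).Infinite := by
  refine Set.infinite_of_injective_forall_mem
    (f := fun n : ℕ => ((1, 0) + (p * n, p * n) : ℤ × ℤ)) (fun a b hab => ?_) fun n => ?_
  · simp only [Prod.mk_add_mk, Prod.mk.injEq, add_right_inj, mul_eq_mul_left_iff, hp, or_false] at hab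
    exact_mod_cast hab.2
  · refine gliderStream_eq_true.2 ⟨0 + 4 * (p * n), ?_, ?_⟩
    · exact Int.modEq_zero_iff_dvd.2 ⟨4 * n, by ring⟩
    · simp only [glider_add_four_mul, add_sub_cancel_right]
      decide

lemma eq_zero_or_exists_glider_ne_of_glider_one_zero : ∀ t ∈ Finset.Icc (-6 : ℤ) 1,
    glider t (1, 0) = true →
      t = 0 ∨ ∃ c ∈ Finset.Icc ((-1, -1) : ℤ × ℤ) (3, 3), glider t c = true ∧ glider 0 c = false := by
  decide

theorem gliderStream_ne {q : ℤ} (hp : 14 ≤ p) (hq : ¬q ≡ 0 [ZMOD p]) :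
    gliderStream p q ≠ gliderStream p 0 := by
  intro h
  have h₀ : gliderStream p q (1, 0) = true := h ▸ gliderStream_eq_true.2 ⟨0, rfl, by decide⟩
  obtain ⟨t, ht, hg⟩ := gliderStream_eq_true.1 h₀
  have := (bounds_of_glider_eq_true hg).2
  rcases eq_zero_or_exists_glider_ne_of_glider_one_zero t (Finset.mem_Icc.2 ⟨by omega, by omega⟩) hg
    with rfl | ⟨c, hc, hgt, hg₀⟩
  · exact hq ht.symm
  · simp only [Finset.mem_Icc, Prod.le_def] at hc
    have h₁ : gliderStream p q c = true := gliderStream_eq_true.2 ⟨t, ht, hgt⟩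
    rw [h, gliderStream_apply_eq (Int.ModEq.refl 0) (by omega) (by omega), hg₀] at h₁
    exact Bool.false_ne_true h₁

end Stream

/-- Infinite glider streams: allowing infinitely many live cells, oscillators
of every period `p ≥ 14` exist. -/
theorem infinite_oscillators : ∀ p : ℕ, 14 ≤ p →
    ∃ f : ℤ × ℤ → Bool, (support f).Infinite ∧ lifeStep^[p] f = f ∧
      ∀ q : ℕ, 0 < q → q < p → lifeStep^[q] f ≠ f := by
  intro p hp
  have hp' : (14 : ℤ) ≤ p := by exact_mod_cast hp
  refine ⟨gliderStream p 0, support_gliderStream_infinite (by omega), ?_, fun q hq hqp => ?_⟩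
  · rw [iterate_lifeStep_gliderStream hp', zero_add]
    exact gliderStream_congr (Int.modEq_zero_iff_dvd.2 dvd_rfl)
  · rw [iterate_lifeStep_gliderStream hp', zero_add]
    refine gliderStream_ne hp' fun hdvd => ?_
    have := Nat.eq_zero_of_dvd_of_lt (Int.natCast_dvd_natCast.1 (Int.modEq_zero_iff_dvd.1 hdvd)) hqp
    omega
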